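/- arXiv:2304.06498 — 2 statements merged into one kernel-verified Lean document; each statement's English description precedes it below -/
import Mathlib

section
/- In NIM(k+1,k) there is no move from a position x with B(x) even to a position x' with B(x') even. -/
/-- `z` is a basic position with parameter `b`: coordinate sum `k*b`, all coordinates
at most `b`, all coordinates even if `b` is even, exactly one even if `b` is odd. -/
def IsBasic (k : ℕ) (z : Fin (k+1) → ℕ) (b : ℕ) : Prop :=
  (∑ i, z i) = k * b ∧ (∀ i, z i ≤ b) ∧
    (Even b → ∀ i, Even (z i)) ∧ (Odd b → ∃! i, Even (z i))

/-- `Pre k y x` means `y ⪯ x`: the sorted vector of `y` is componentwise ≤ that of `x`. -/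
def Pre (k : ℕ) (y x : Fin (k+1) → ℕ) : Prop :=
  ∀ i, (y ∘ Tuple.sort y) i ≤ (x ∘ Tuple.sort x) i

/-- `BVal k x = max { b : some basic z with parameter b satisfies z ⪯ x }`. -/
noncomputable def BVal (k : ℕ) (x : Fin (k+1) → ℕ) : ℕ :=
  sSup {b | ∃ z, IsBasic k z b ∧ Pre k z x}

/-- A move in NIM(k+1,k): keep coordinate `i`, decrease every other (positive) coordinate by 1. -/
def MoveK (k : ℕ) (x y : Fin (k+1) → ℕ) : Prop :=
  ∃ i, (∀ j, j ≠ i → 0 < x j) ∧ ∀ j, y j = if j = i then x j else x j - 1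

/-- The M-move: keep a smallest even coordinate if one exists, otherwise keep a
largest coordinate; decrease the other k (positive) coordinates by 1. -/
def MMove (k : ℕ) (x y : Fin (k+1) → ℕ) : Prop :=
  ∃ i, (∀ j, j ≠ i → 0 < x j) ∧
    ((∃ j, Even (x j)) → Even (x i) ∧ ∀ j, Even (x j) → x i ≤ x j) ∧
    ((∀ j, Odd (x j)) → ∀ j, x j ≤ x i) ∧
    (∀ j, y j = if j = i then x j else x j - 1)

/-- Exceptional position: all coordinates odd, all `< m`, and `|x| = k*m + k - 1`
for some even `m`. -/
def Exceptional (k : ℕ) (x : Fin (k+1) → ℕ) : Prop :=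
  ∃ m, Even m ∧ (∀ i, Odd (x i)) ∧ (∀ i, x i < m) ∧ (∑ i, x i) = k * m + k - 1

/-- `MVal k x m`: playing the M-rule from `x`, the game ends after exactly `m` moves. -/
inductive MVal (k : ℕ) : (Fin (k+1) → ℕ) → ℕ → Prop
  | zero (x) : (¬ ∃ y, MoveK k x y) → MVal k x 0
  | succ (x y m) : MMove k x y → MVal k y m → MVal k x (m + 1)

/-!
Let `b = B(x)` and `b' = B(x')`, both even. Since `x' ≤ x` coordinatewise, `b' ≤ b`; and
`b' = b` is impossible, since adding `1` to the `k` moved coordinates of a basic witness for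
`x'` gives an odd basic position of parameter `b + 1` below `x`. Hence `b' + 2 ≤ b`, and the
contradiction comes from an odd basic position of parameter `b' + 1` below `x'`, built from even
basic witnesses `ζ ≤ x` (parameter `b`) and `z ≤ x'` (parameter `b'`). If some coordinate `t`
satisfies `ζ t ≤ min b' (x' t)`, keep it and replace every other coordinate of `ζ` by its
truncation at `b' + 2`, minus one: this lies below `x'`, has the odd parity pattern and
coordinate sum at least `k (b' + 1)`, and it can be lowered by pairs to the exact sum.
Otherwise `z < ζ` coordinatewise, so adding `1` to all but one coordinate of `z` stays below `x'`.
-/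

open Finset

theorem Tuple.comp_sort_le_comp_sort {n : ℕ} {α : Type*} [LinearOrder α] {f g : Fin n → α}
    (h : f ≤ g) : f ∘ Tuple.sort f ≤ g ∘ Tuple.sort g := by
  classical
  intro j
  have hsort (φ : Fin n → α) (a : α) : #{i | (φ ∘ Tuple.sort φ) i ≤ a} = #{i | φ i ≤ a} :=
    card_equiv (Tuple.sort φ) (by simp)
  have hcard : #{i | g i ≤ (g ∘ Tuple.sort g) j} ≤ #{i | f i ≤ (g ∘ Tuple.sort g) j} :=
    card_le_card fun i hi => by
      simp only [mem_filter, mem_univ, true_and] at hi ⊢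
      exact (h i).trans hi
  have hg : (j : ℕ) < #{i | (g ∘ Tuple.sort g) i ≤ (g ∘ Tuple.sort g) j} :=
    (Tuple.lt_card_le_iff_apply_le_of_monotone (Tuple.monotone_sort g)).2 le_rfl
  rw [← Tuple.lt_card_le_iff_apply_le_of_monotone (Tuple.monotone_sort f), hsort]
  rw [hsort] at hg
  omega

theorem Finset.exists_le_sum_eq_of_le_sum {ι : Type*} [DecidableEq ι] (s : Finset ι) {f : ι → ℕ} :
    ∀ {n : ℕ}, n ≤ ∑ i ∈ s, f i → ∃ g ≤ f, ∑ i ∈ s, g i = n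
  | 0, _ => ⟨0, fun _ => Nat.zero_le _, by simp⟩
  | n + 1, h => by
    obtain ⟨g, hgf, hg⟩ := exists_le_sum_eq_of_le_sum s (f := f) (n := n) (by omega)
    obtain ⟨i, hi, hlt⟩ := exists_lt_of_sum_lt (hg.trans_lt h)
    refine ⟨Function.update g i (g i + 1), fun j => ?_, ?_⟩
    · rcases eq_or_ne j i with rfl | hj
      · simpa using hlt
      · simpa [hj] using hgf j
    · rw [sum_update_of_mem hi, ← hg, ← add_sum_erase s g hi, sdiff_singleton_eq_erase]
      ring

section Basic

variable {k : ℕ}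

theorem sum_add_ite (f : Fin (k + 1) → ℕ) (t : Fin (k + 1)) :
    ∑ j, (f j + if j = t then 0 else 1) = ∑ j, f j + k := by
  simp [sum_add_distrib, sum_ite, filter_ne', card_erase_of_mem]

theorem IsBasic.comp_perm {z : Fin (k + 1) → ℕ} {b : ℕ} (hz : IsBasic k z b)
    (σ : Equiv.Perm (Fin (k + 1))) : IsBasic k (z ∘ σ) b :=
  ⟨(Equiv.sum_comp σ z).trans hz.1, fun i => hz.2.1 (σ i), fun hb i => hz.2.2.1 hb (σ i),
    fun hb => σ.existsUnique_congr_right.mpr (hz.2.2.2 hb)⟩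

theorem isBasic_of_odd {w : Fin (k + 1) → ℕ} {c : ℕ} (hc : Odd c) (hsum : ∑ j, w j = k * c)
    (hle : ∀ j, w j ≤ c) {t : Fin (k + 1)} (ht : Even (w t)) (hodd : ∀ j ≠ t, Odd (w j)) :
    IsBasic k w c :=
  ⟨hsum, hle, fun hc' => absurd hc (Nat.not_odd_iff_even.2 hc'),
    fun _ => ⟨t, ht, fun j hj => by_contra fun hjt => Nat.not_even_iff_odd.2 (hodd j hjt) hj⟩⟩

theorem IsBasic.add_ite {z : Fin (k + 1) → ℕ} {b : ℕ} (hz : IsBasic k z b) (hb : Even b)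
    (t : Fin (k + 1)) : IsBasic k (fun j => z j + if j = t then 0 else 1) (b + 1) := by
  refine isBasic_of_odd hb.add_one ?_ (fun j => ?_) (t := t) (by simpa using hz.2.2.1 hb t)
    fun j hj => by simpa [hj] using (hz.2.2.1 hb j).add_one
  · rw [sum_add_ite, hz.1]
    ring
  · have := hz.2.1 j
    split_ifs <;> omega

theorem IsBasic.sum_tsub_eq {z : Fin (k + 1) → ℕ} {b : ℕ} (hz : IsBasic k z b) :
    ∑ j, (b - z j) = b := by
  have h : ∑ j, (b - z j) + ∑ j, z j = (k + 1) * b := by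
    rw [← sum_add_distrib, sum_congr rfl fun j _ => Nat.sub_add_cancel (hz.2.1 j)]
    simp
  rw [hz.1, add_mul, one_mul] at h
  omega

theorem IsBasic.eq_of_apply_eq_zero {z : Fin (k + 1) → ℕ} {b : ℕ} (hz : IsBasic k z b)
    (hb : 0 < b) {a a' : Fin (k + 1)} (ha : z a = 0) (ha' : z a' = 0) : a = a' := by
  by_contra hne
  have hpair := sum_pair hne (f := fun j => b - z j)
  have hsub := sum_le_sum_of_subset (f := fun j => b - z j) (subset_univ {a, a'})
  simp only [ha, ha', hz.sum_tsub_eq] at hpair hsub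
  omega

theorem IsBasic.le_sum_min {z : Fin (k + 1) → ℕ} {b c : ℕ} (hz : IsBasic k z b) (hcb : c ≤ b) :
    k * c ≤ ∑ j, min (z j) c := by
  have hdef : ∑ j, (c - z j) ≤ c := by
    by_cases hsmall : ∃ a, z a < c
    · obtain ⟨a, ha⟩ := hsmall
      have hrest : ∑ j ∈ {a}ᶜ, (c - z j) ≤ ∑ j ∈ {a}ᶜ, (b - z j) :=
        sum_le_sum fun j _ => by omega
      have := hz.sum_tsub_eq
      rw [Fintype.sum_eq_add_sum_compl a] at this ⊢
      omega
    · push Not at hsmall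
      simp [Nat.sub_eq_zero_of_le (hsmall _)]
  have h : ∑ j, min (z j) c + ∑ j, (c - z j) = (k + 1) * c := by
    rw [← sum_add_distrib, sum_congr rfl fun j _ => show min (z j) c + (c - z j) = c by omega]
    simp
  rw [add_mul, one_mul] at h
  omega

theorem exists_isBasic_le_of_le_sum {u : Fin (k + 1) → ℕ} {c : ℕ} (hc : Odd c)
    (hle : ∀ j, u j ≤ c) {t : Fin (k + 1)} (ht : Even (u t)) (hodd : ∀ j ≠ t, Odd (u j))
    (hsum : k * c ≤ ∑ j, u j) : ∃ w ≤ u, IsBasic k w c := by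
  obtain ⟨e, rfl⟩ := hc
  have hhalf : ∀ (a : Fin (k + 1) → ℕ),
      ∑ j, (2 * a j + if j = t then 0 else 1) = 2 * ∑ j, a j + k := fun a => by
    rw [sum_add_ite, ← mul_sum]
  have hu : ∀ j, u j = 2 * (u j / 2) + if j = t then 0 else 1 := fun j => by
    split_ifs with hj
    · subst hj; have := Nat.even_iff.1 ht; omega
    · have := Nat.odd_iff.1 (hodd j hj); omega
  have hsum' : k * e ≤ ∑ j, u j / 2 := by
    rw [sum_congr rfl fun j _ => hu j, hhalf] at hsum
    linarith
  obtain ⟨a, hau, hasum⟩ := exists_le_sum_eq_of_le_sum univ hsum'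
  have hwu : (fun j => 2 * a j + if j = t then 0 else 1) ≤ u := fun j => by
    have : a j ≤ u j / 2 := hau j
    have := hu j
    dsimp only
    omega
  refine ⟨_, hwu, isBasic_of_odd ⟨e, rfl⟩ ?_ (fun j => (hwu j).trans (hle j)) (t := t)
    (by simp) fun j hj => by simp [hj]⟩
  rw [hhalf, hasum]
  ring

end Basic

section BVal

variable {k : ℕ}

theorem Pre.of_le {z x : Fin (k + 1) → ℕ} (h : z ≤ x) : Pre k z x :=
  Tuple.comp_sort_le_comp_sort h

theorem Pre.exists_perm_comp_le {z x : Fin (k + 1) → ℕ} (h : Pre k z x) :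
    ∃ σ : Equiv.Perm (Fin (k + 1)), z ∘ σ ≤ x :=
  ⟨(Tuple.sort x).symm.trans (Tuple.sort z), fun j => by
    simpa using h ((Tuple.sort x).symm j)⟩

theorem bddAbove_basic (hk : 1 ≤ k) (x : Fin (k + 1) → ℕ) :
    BddAbove {b | ∃ z, IsBasic k z b ∧ Pre k z x} := by
  refine ⟨∑ j, x j, fun b ⟨z, hz, hzx⟩ => ?_⟩
  obtain ⟨σ, hσ⟩ := hzx.exists_perm_comp_le
  have : k * b ≤ ∑ j, x j := (hz.comp_perm σ).1 ▸ sum_le_sum fun j _ => hσ j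
  nlinarith

theorem le_bVal (hk : 1 ≤ k) {z x : Fin (k + 1) → ℕ} {b : ℕ} (hz : IsBasic k z b) (hzx : z ≤ x) :
    b ≤ BVal k x :=
  le_csSup (bddAbove_basic hk x) ⟨z, hz, Pre.of_le hzx⟩

theorem exists_isBasic_bVal_le (hk : 1 ≤ k) (x : Fin (k + 1) → ℕ) :
    ∃ z, IsBasic k z (BVal k x) ∧ z ≤ x := by
  have hzero : IsBasic k 0 0 := ⟨by simp, by simp, fun _ _ => Even.zero, by simp⟩
  obtain ⟨z, hz, hzx⟩ : ∃ z, IsBasic k z (BVal k x) ∧ Pre k z x :=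
    Nat.sSup_mem (s := {b | ∃ z, IsBasic k z b ∧ Pre k z x})
      ⟨0, 0, hzero, Pre.of_le fun _ => Nat.zero_le _⟩ (bddAbove_basic hk x)
  obtain ⟨σ, hσ⟩ := hzx.exists_perm_comp_le
  exact ⟨z ∘ σ, hz.comp_perm σ, hσ⟩

theorem bVal_mono (hk : 1 ≤ k) {x y : Fin (k + 1) → ℕ} (h : y ≤ x) : BVal k y ≤ BVal k x :=
  let ⟨_, hz, hzy⟩ := exists_isBasic_bVal_le hk y
  le_bVal hk hz (hzy.trans h)

end BVal

section Descent

variable {k : ℕ} {ζ x y : Fin (k + 1) → ℕ} {b : ℕ}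

theorem IsBasic.exists_isBasic_odd_le {c : ℕ} (hζ : IsBasic k ζ b) (hb : Even b) (hc : Odd c)
    (hcb : c < b) (hζx : ζ ≤ x) (hxy : ∀ j, x j ≤ y j + 1) {t : Fin (k + 1)} (htc : ζ t ≤ c)
    (hty : ζ t ≤ y t) (hpos : ∀ j ≠ t, ζ j ≠ 0) : ∃ w, IsBasic k w c ∧ w ≤ y := by
  have hc' := Nat.odd_iff.1 hc
  have hζeven j : ζ j % 2 = 0 := Nat.even_iff.1 (hζ.2.2.1 hb j)
  set u : Fin (k + 1) → ℕ := fun j => if j = t then ζ j else min (ζ j) (c + 1) - 1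
  have hmin : k * (c + 1) ≤ ∑ j, min (ζ j) (c + 1) := hζ.le_sum_min (by omega)
  have hsum : ∑ j, u j + k = ∑ j, min (ζ j) (c + 1) := by
    rw [← sum_add_ite u t]
    refine sum_congr rfl fun j _ => ?_
    have := hζeven j; have := hpos j
    by_cases hj : j = t <;> simp [u, hj] <;> omega
  have huy : u ≤ y := fun j => by
    have : ζ j ≤ x j := hζx j
    have := hxy j
    by_cases hj : j = t <;> simp [u, hj] <;> omega
  obtain ⟨w, hwu, hw⟩ := exists_isBasic_le_of_le_sum hc (u := u) (t := t)
    (fun j => by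
      have := hζeven j
      simp only [u]
      split_ifs with hj
      exacts [hj ▸ htc, by omega])
    (by simpa [u] using hζ.2.2.1 hb t)
    (fun j hj => by have := hζeven j; have := hpos j hj; simp [u, hj, Nat.odd_iff]; omega)
    (by rw [mul_add] at hmin; omega)
  exact ⟨w, hw, hwu.trans huy⟩

theorem IsBasic.exists_isBasic_succ_le {z : Fin (k + 1) → ℕ} {b' : ℕ} (hζ : IsBasic k ζ b)
    (hb : Even b) (hζx : ζ ≤ x) (hz : IsBasic k z b') (hb' : Even b') (hzy : z ≤ y)
    (hxy : ∀ j, x j ≤ y j + 1) (hlt : b' < b) : ∃ w, IsBasic k w (b' + 1) ∧ w ≤ y := by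
  have hbb : b' + 2 ≤ b := by
    have := Nat.even_iff.1 hb; have := Nat.even_iff.1 hb'; omega
  by_cases hfree : ∃ t, ζ t ≤ b' ∧ ζ t ≤ y t
  · -- a zero coordinate of `ζ` (there is at most one) cannot be decreased, so it is the kept one
    obtain ⟨t, htb, hty, hpos⟩ : ∃ t, ζ t ≤ b' ∧ ζ t ≤ y t ∧ ∀ j ≠ t, ζ j ≠ 0 := by
      by_cases hzero : ∃ t, ζ t = 0
      · obtain ⟨t, ht⟩ := hzero
        exact ⟨t, by omega, by omega, fun j hj h0 => hj (hζ.eq_of_apply_eq_zero (by omega) h0 ht)⟩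
      · push Not at hzero
        obtain ⟨t, htb, hty⟩ := hfree
        exact ⟨t, htb, hty, fun j _ => hzero j⟩
    exact hζ.exists_isBasic_odd_le hb hb'.add_one (by omega) hζx hxy (by omega) hty hpos
  · push Not at hfree
    -- `z j < ζ j` with both even leaves room to add one to every coordinate of `z`
    refine ⟨_, hz.add_ite hb' 0, fun j => ?_⟩
    have : z j ≤ y j := hzy j
    have : ζ j ≤ x j := hζx j
    have := hfree j; have := hz.2.1 j; have := hxy j
    have := Nat.even_iff.1 (hz.2.2.1 hb' j); have := Nat.even_iff.1 (hζ.2.2.1 hb j)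
    dsimp only
    split_ifs <;> omega

end Descent

theorem stmt10 (k : ℕ) (hk : 2 ≤ k) (x x' : Fin (k+1) → ℕ)
    (h : MoveK k x x') (heven : Even (BVal k x)) :
    ¬ Even (BVal k x') := by
  intro heven'
  obtain ⟨i, hpos, hx'⟩ := h
  have hk1 : 1 ≤ k := by omega
  have hx'x : x' ≤ x := fun j => show x' j ≤ x j by rw [hx' j]; split_ifs <;> omega
  have hxx' j : x j ≤ x' j + 1 := by rw [hx' j]; split_ifs <;> omega
  obtain ⟨ζ, hζ, hζx⟩ := exists_isBasic_bVal_le hk1 x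
  obtain ⟨z, hz, hzx'⟩ := exists_isBasic_bVal_le hk1 x'
  have hne : BVal k x' ≠ BVal k x := fun heq => by
    have hlift : (fun j => z j + if j = i then 0 else 1) ≤ x := fun j => by
      have : z j ≤ if j = i then x j else x j - 1 := hx' j ▸ hzx' j
      have := hpos j
      dsimp only
      split_ifs at * <;> omega
    have := le_bVal hk1 (hz.add_ite heven' i) hlift
    omega
  obtain ⟨w, hw, hwx'⟩ := hζ.exists_isBasic_succ_le heven hζx hz heven' hzx' hxx'
    ((bVal_mono hk1 hx'x).lt_of_ne hne)
  have := le_bVal hk1 hw hwx'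
  omega
end

section
/- Call x ∈ ℤ_{≥0}^{k+1} exceptional if all coordinates of x are odd, max_i x_i < m, and |x| = k·m + k − 1 for some even m (denoted m(x)). If x is exceptional then B(x) < m(x). -/
/-!
A basic `z ⪯ x` has `k·b(z) = |z| ≤ |x| = k·m + k − 1`, so `b(z) ≤ m`. Equality is impossible:
then every `z_i` is even while every `x_i` is odd, so each sorted coordinate of `z` lies strictly
below that of `x`, and `|z| + k + 1 ≤ |x|`, contradicting `|z| = k·m`.
-/

section Pre

variable {k : ℕ} {z x : Fin (k+1) → ℕ}

lemma Pre.sum_le (h : Pre k z x) : ∑ i, z i ≤ ∑ i, x i := by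
  rw [← Equiv.sum_comp (Tuple.sort z) z, ← Equiv.sum_comp (Tuple.sort x) x]
  exact Finset.sum_le_sum fun i _ => h i

lemma Pre.sum_add_card_le_of_even_of_odd (h : Pre k z x) (hz : ∀ i, Even (z i))
    (hx : ∀ i, Odd (x i)) : ∑ i, z i + (k + 1) ≤ ∑ i, x i := by
  have hlt : ∀ i, z (Tuple.sort z i) + 1 ≤ x (Tuple.sort x i) := fun i =>
    (show z (Tuple.sort z i) ≤ x (Tuple.sort x i) from h i).lt_of_ne fun he =>
      Nat.not_even_iff_odd.mpr (hx _) (he ▸ hz _)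
  calc ∑ i, z i + (k + 1) = ∑ i, (z (Tuple.sort z i) + 1) := by
        rw [Finset.sum_add_distrib, Equiv.sum_comp (Tuple.sort z) z]; simp
    _ ≤ ∑ i, x (Tuple.sort x i) := Finset.sum_le_sum fun i _ => hlt i
    _ = ∑ i, x i := Equiv.sum_comp _ _

end Pre

lemma IsBasic.lt_of_pre {k m b : ℕ} {z x : Fin (k+1) → ℕ} (hk : 0 < k) (hm : Even m)
    (hodd : ∀ i, Odd (x i)) (hsum : ∑ i, x i = k * m + k - 1)
    (hz : IsBasic k z b) (hzx : Pre k z x) : b < m := by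
  obtain ⟨hzsum, -, heven, -⟩ := hz
  have hbm : b ≤ m := by
    have hkb : k * b < k * (m + 1) := by
      have := hzx.sum_le
      rw [hzsum, hsum] at this
      rw [Nat.mul_succ]
      omega
    exact Nat.lt_succ_iff.mp (Nat.lt_of_mul_lt_mul_left hkb)
  refine hbm.lt_of_ne ?_
  rintro rfl
  have := hzx.sum_add_card_le_of_even_of_odd (heven hm) hodd
  omega

lemma BVal_lt_of_forall_isBasic {k m : ℕ} {x : Fin (k+1) → ℕ} (hm : 0 < m)
    (h : ∀ b z, IsBasic k z b → Pre k z x → b < m) : BVal k x < m :=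
  Nat.lt_of_le_pred hm <| csSup_le' fun b ⟨z, hz, hzx⟩ => Nat.le_pred_of_lt (h b z hz hzx)

theorem stmt11 (k : ℕ) (hk : 2 ≤ k) (x : Fin (k+1) → ℕ) (m : ℕ)
    (hm : Even m) (hodd : ∀ i, Odd (x i)) (hlt : ∀ i, x i < m)
    (hsum : (∑ i, x i) = k * m + k - 1) : BVal k x < m :=
  BVal_lt_of_forall_isBasic ((Nat.zero_le _).trans_lt (hlt 0)) fun _ _ hz hzx =>
    hz.lt_of_pre (by omega) hm hodd hsum hzx
end
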